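/- (Theorem 1.) In the setting of the quantum relaxation of MaxCut, magic state rounding achieves an expected approximation ratio of at least 5/9: let G = (V, E) be a finite simple graph with E nonempty, with injective qubit assignment σ : V → Fin n × Fin 3 mapping adjacent vertices to distinct qubits, relaxed Hamiltonian H = Σ_{{u,v} ∈ E} (1/2)·(Id − 3·P_u·P_v), and let c* = max over m : V → {−1,1} of cut(m). Then for every positive-semidefinite n-qubit matrix ρ with trace 1 whose energy satisfies Re(tr(H·ρ)) ≥ c*, the expected rounded energy satisfies Re(tr(H · R(ρ))) ≥ (5/9)·c*. -/

import Mathlib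

open Matrix
open scoped Classical ComplexOrder

/-- The Pauli `X` matrix. -/
noncomputable def PX : Matrix (Fin 2) (Fin 2) ℂ := !![0, 1; 1, 0]

/-- The Pauli `Y` matrix. -/
noncomputable def PY : Matrix (Fin 2) (Fin 2) ℂ := !![0, -Complex.I; Complex.I, 0]

/-- The Pauli `Z` matrix. -/
noncomputable def PZ : Matrix (Fin 2) (Fin 2) ℂ := !![1, 0; 0, -1]

/-- The three non-identity Pauli matrices `q₁ = X, q₂ = Y, q₃ = Z` (slots indexed by `Fin 3`). -/
noncomputable def pauliXYZ : Fin 3 → Matrix (Fin 2) (Fin 2) ℂ := ![PX, PY, PZ]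

/-- The single-qubit magic state `μ_u` for `u ∈ {−1,1}³`. -/
noncomputable def magic (u : Fin 3 → ℝ) : Matrix (Fin 2) (Fin 2) ℂ :=
  (1 / 2 : ℂ) • ((1 : Matrix (Fin 2) (Fin 2) ℂ) +
    (1 / (Real.sqrt 3 : ℂ)) • ((u 0 : ℂ) • PX + (u 1 : ℂ) • PY + (u 2 : ℂ) • PZ))

/-- `±1`-valued sign of a Boolean, used to enumerate `{−1,1}³` by `Fin 3 → Bool`. -/
noncomputable def bsign (b : Bool) : ℝ := if b then 1 else -1

/-- The `n`-qubit tensor product of magic states `M_u` for `u : Fin n → {−1,1}³`. -/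
noncomputable def magicProd (n : ℕ) (u : Fin n → Fin 3 → Bool) :
    Matrix (Fin n → Fin 2) (Fin n → Fin 2) ℂ :=
  Matrix.of fun x y => ∏ q, magic (fun i => bsign (u q i)) (x q) (y q)

/-- The expected magic-state-rounding channel on `n` qubits:
`R(ρ) = (1/4ⁿ)·Σ_u tr(M_u·ρ)·M_u`. -/
noncomputable def roundCh (n : ℕ) (ρ : Matrix (Fin n → Fin 2) (Fin n → Fin 2) ℂ) :
    Matrix (Fin n → Fin 2) (Fin n → Fin 2) ℂ :=
  (1 / 4 ^ n : ℂ) • ∑ u : Fin n → Fin 3 → Bool, (magicProd n u * ρ).trace • magicProd n u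

/-- The vertex operator `P_v`: the weight-1 Pauli string acting as the Pauli matrix of slot
`(σ v).2` on qubit `(σ v).1` and as the identity on all other qubits. -/
noncomputable def vertexOp {V : Type*} (n : ℕ) (σ : V → Fin n × Fin 3) (v : V) :
    Matrix (Fin n → Fin 2) (Fin n → Fin 2) ℂ :=
  Matrix.of fun x y =>
    pauliXYZ (σ v).2 (x (σ v).1) (y (σ v).1) *
      ∏ q ∈ Finset.univ.erase (σ v).1, (if x q = y q then (1 : ℂ) else 0)

/-- The relaxed Hamiltonian `H = Σ_{{u,v} ∈ E} (1/2)·(Id − 3·P_u·P_v)`. -/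
noncomputable def relaxH {V : Type*} [Fintype V] [DecidableEq V] (n : ℕ)
    (σ : V → Fin n × Fin 3) (G : SimpleGraph V) [DecidableRel G.Adj] :
    Matrix (Fin n → Fin 2) (Fin n → Fin 2) ℂ :=
  ∑ e ∈ G.edgeFinset, (1 / 2 : ℂ) •
    ((1 : Matrix (Fin n → Fin 2) (Fin n → Fin 2) ℂ) -
      (3 : ℂ) • (vertexOp n σ e.out.1 * vertexOp n σ e.out.2))

/-- The cut value `cut(m) = Σ_{{u,v} ∈ E} (1/2)·(1 − m(u)·m(v))`. -/
noncomputable def cutVal {V : Type*} [Fintype V] [DecidableEq V]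
    (G : SimpleGraph V) [DecidableRel G.Adj] (m : V → ℝ) : ℝ :=
  ∑ e ∈ G.edgeFinset, (1 / 2 : ℝ) * (1 - m e.out.1 * m e.out.2)

/-!
The rounding channel `R` is the `n`-fold Kronecker power of the single-qubit channel
`Φ(A) = (1/4)·Σ_v tr(μ_v·A)·μ_v`. Writing `μ_v = (1/2)·(I + (1/√3)·Σ_j v_j·q_j)`, the Pauli
orthogonality `tr(q_j·q_s) = 2·δ_{js}` together with the fact that the eight sign vectors
`v ∈ {−1,1}³` have mean `0` and second moment `8·I` gives `Φ(I) = I` and `Φ(q_s) = q_s/3`.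
Each edge term `P_u·P_v` of `H` is a Kronecker product with two Pauli factors on distinct qubits,
so `R(P_u·P_v) = P_u·P_v/9` and hence `R(H) = H/9 + (4|E|/9)·Id`. Since `R` is symmetric for the
trace pairing, `tr(H·R(ρ)) = tr(R(H)·ρ) = tr(H·ρ)/9 + 4|E|/9 ≥ c*/9 + 4c*/9`, using `c* ≤ |E|`.
-/

def piKronecker {ι R l m : Type*} [Fintype ι] [CommMonoid R] (f : ι → Matrix l m R) :
    Matrix (ι → l) (ι → m) R :=
  Matrix.of fun x y => ∏ q, f q (x q) (y q)

section PiKronecker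

variable {ι κ R l m n : Type*} [Fintype ι] [CommSemiring R]

theorem piKronecker_mul [DecidableEq ι] [Fintype m] (f : ι → Matrix l m R)
    (g : ι → Matrix m n R) :
    piKronecker f * piKronecker g = piKronecker fun q => f q * g q := by
  ext x y
  simp only [piKronecker, mul_apply, of_apply, Finset.prod_univ_sum, Fintype.piFinset_univ,
    Finset.prod_mul_distrib]

theorem trace_piKronecker [DecidableEq ι] [Fintype m] (f : ι → Matrix m m R) :
    (piKronecker f).trace = ∏ q, (f q).trace := by
  simp only [trace, diag, piKronecker, of_apply, Finset.prod_univ_sum, Fintype.piFinset_univ]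

theorem piKronecker_one [DecidableEq m] : (piKronecker fun _ : ι => (1 : Matrix m m R)) = 1 := by
  ext x y
  simp only [piKronecker, of_apply, one_apply, Finset.prod_boole,
    Finset.mem_univ, true_implies, funext_iff]

theorem piKronecker_smul (c : ι → R) (f : ι → Matrix l m R) :
    (piKronecker fun q => c q • f q) = (∏ q, c q) • piKronecker f := by
  ext x y
  simp [piKronecker, Finset.prod_mul_distrib]

theorem sum_piKronecker [DecidableEq ι] [Fintype κ] (F : ι → κ → Matrix l m R) :
    ∑ u : ι → κ, piKronecker (fun q => F q (u q)) = piKronecker fun q => ∑ k, F q k := by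
  ext x y
  simp only [piKronecker, Matrix.sum_apply, of_apply, Finset.prod_univ_sum, Fintype.piFinset_univ]

end PiKronecker

theorem sum_bsign (i : Fin 3) : ∑ v : Fin 3 → Bool, (bsign (v i) : ℂ) = 0 := by
  have key : ∑ v : Fin 3 → Bool, (if v i then 1 else -1 : ℤ) = 0 := by revert i; decide
  simpa [bsign, apply_ite (fun x : ℝ => (x : ℂ))] using congrArg (Int.cast : ℤ → ℂ) key

theorem sum_bsign_mul_bsign (i j : Fin 3) :
    ∑ v : Fin 3 → Bool, (bsign (v i) : ℂ) * bsign (v j) = if i = j then 8 else 0 := by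
  have key : ∑ v : Fin 3 → Bool, (if v i then 1 else -1 : ℤ) * (if v j then 1 else -1) =
      if i = j then 8 else 0 := by revert i j; decide
  simpa [bsign, apply_ite (fun x : ℝ => (x : ℂ)), apply_ite (fun x : ℤ => (x : ℂ))] using
    congrArg (Int.cast : ℤ → ℂ) key

theorem magic_eq_pauli_sum (u : Fin 3 → ℝ) :
    magic u = (1 / 2 : ℂ) • 1 + ∑ j, ((u j : ℂ) / (2 * Real.sqrt 3)) • pauliXYZ j := by
  simp only [magic, Fin.sum_univ_three, pauliXYZ, Matrix.cons_val]
  module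

theorem trace_pauliXYZ (j : Fin 3) : (pauliXYZ j).trace = 0 := by
  fin_cases j <;> simp [pauliXYZ, PX, PY, PZ, trace]

theorem trace_pauliXYZ_mul_pauliXYZ (j s : Fin 3) :
    (pauliXYZ j * pauliXYZ s).trace = if j = s then 2 else 0 := by
  fin_cases j <;> fin_cases s <;> simp [pauliXYZ, PX, PY, PZ, trace, one_add_one_eq_two]

theorem trace_magic (u : Fin 3 → ℝ) : (magic u).trace = 1 := by
  rw [magic_eq_pauli_sum, trace_add, trace_smul, trace_one, trace_sum]
  simp [trace_smul, trace_pauliXYZ]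

theorem trace_magic_mul_pauliXYZ (u : Fin 3 → ℝ) (s : Fin 3) :
    (magic u * pauliXYZ s).trace = u s / Real.sqrt 3 := by
  rw [magic_eq_pauli_sum, Matrix.add_mul, Finset.sum_mul, trace_add, trace_sum]
  simp only [Matrix.smul_mul, one_mul, trace_smul, trace_pauliXYZ, trace_pauliXYZ_mul_pauliXYZ,
    smul_eq_mul, mul_zero, mul_ite, Finset.sum_ite_eq', Finset.mem_univ, if_true, zero_add]
  ring

theorem sum_smul_magic (c : (Fin 3 → Bool) → ℂ) :
    ∑ v, c v • magic (fun i => bsign (v i)) =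
      ((∑ v, c v) / 2) • 1 +
        ∑ j, ((∑ v, c v * bsign (v j)) / (2 * Real.sqrt 3)) • pauliXYZ j := by
  simp only [magic_eq_pauli_sum, smul_add, Finset.smul_sum, smul_smul, Finset.sum_add_distrib]
  rw [Finset.sum_comm]
  simp only [← Finset.sum_smul]
  congr 1
  · rw [Finset.sum_div]
    congr! 2 with v
    ring
  · simp only [Finset.sum_div, mul_div_assoc]

noncomputable def qubitRoundCh (A : Matrix (Fin 2) (Fin 2) ℂ) : Matrix (Fin 2) (Fin 2) ℂ :=
  (1 / 4 : ℂ) • ∑ v : Fin 3 → Bool,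
    (magic (fun i => bsign (v i)) * A).trace • magic (fun i => bsign (v i))

theorem qubitRoundCh_one : qubitRoundCh 1 = 1 := by
  simp only [qubitRoundCh, mul_one, trace_magic, sum_smul_magic, one_mul, sum_bsign, zero_div,
    zero_smul, Finset.sum_const_zero, add_zero, smul_smul]
  norm_num

theorem qubitRoundCh_pauliXYZ (s : Fin 3) :
    qubitRoundCh (pauliXYZ s) = (1 / 3 : ℂ) • pauliXYZ s := by
  have h3 : ((Real.sqrt 3 : ℝ) : ℂ) ^ 2 = 3 := by
    rw [← Complex.ofReal_pow, Real.sq_sqrt] <;> norm_num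
  simp only [qubitRoundCh, trace_magic_mul_pauliXYZ, sum_smul_magic, div_mul_eq_mul_div,
    ← Finset.sum_div, sum_bsign, sum_bsign_mul_bsign, zero_div, zero_smul, zero_add, ite_div,
    ite_smul, Finset.sum_ite_eq, Finset.mem_univ, if_true, smul_smul]
  congr 1
  field_simp
  rw [h3]
  norm_num

@[simps]
noncomputable def roundChLinearMap (n : ℕ) :
    Matrix (Fin n → Fin 2) (Fin n → Fin 2) ℂ →ₗ[ℂ]
      Matrix (Fin n → Fin 2) (Fin n → Fin 2) ℂ where
  toFun := roundCh n
  map_add' A B := by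
    simp only [roundCh, Matrix.mul_add, trace_add, add_smul, Finset.sum_add_distrib, smul_add]
  map_smul' c A := by
    simp [roundCh, Finset.smul_sum, smul_comm c, mul_smul]

section Rounding

variable {n : ℕ}

theorem magicProd_eq_piKronecker (u : Fin n → Fin 3 → Bool) :
    magicProd n u = piKronecker fun q => magic fun i => bsign (u q i) := rfl

theorem vertexOp_eq_piKronecker {V : Type*} (σ : V → Fin n × Fin 3) (v : V) :
    vertexOp n σ v = piKronecker fun q => if q = (σ v).1 then pauliXYZ (σ v).2 else 1 := by
  ext x y
  simp only [vertexOp, piKronecker, of_apply]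
  rw [← Finset.mul_prod_erase _ _ (Finset.mem_univ (σ v).1)]
  congr 1
  · simp
  · refine Finset.prod_congr rfl fun q hq => ?_
    simp [Finset.ne_of_mem_erase hq, one_apply]

theorem roundCh_piKronecker (f : Fin n → Matrix (Fin 2) (Fin 2) ℂ) :
    roundCh n (piKronecker f) = piKronecker fun q => qubitRoundCh (f q) := by
  have hterm (u : Fin n → Fin 3 → Bool) :
      (magicProd n u * piKronecker f).trace • magicProd n u = piKronecker fun q =>
        (magic (fun i => bsign (u q i)) * f q).trace • magic fun i => bsign (u q i) := by
    rw [magicProd_eq_piKronecker, piKronecker_mul, trace_piKronecker, piKronecker_smul]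
  rw [roundCh, Finset.sum_congr rfl fun u _ => hterm u,
    sum_piKronecker fun q (v : Fin 3 → Bool) =>
      (magic (fun i => bsign (v i)) * f q).trace • magic fun i => bsign (v i)]
  simp only [qubitRoundCh, piKronecker_smul, Finset.prod_const, Finset.card_univ,
    Fintype.card_fin, one_div, inv_pow]

theorem trace_mul_roundCh (A ρ : Matrix (Fin n → Fin 2) (Fin n → Fin 2) ℂ) :
    (A * roundCh n ρ).trace = (roundCh n A * ρ).trace := by
  simp only [roundCh, Matrix.mul_smul, Matrix.smul_mul, Matrix.mul_sum, Matrix.sum_mul,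
    trace_smul, trace_sum, smul_eq_mul]
  congr 1
  refine Finset.sum_congr rfl fun u _ => ?_
  rw [trace_mul_comm A, mul_comm]

theorem roundCh_one : roundCh n 1 = 1 := by
  rw [← piKronecker_one, roundCh_piKronecker]
  simp [qubitRoundCh_one]

theorem roundCh_vertexOp_mul_vertexOp {V : Type*} (σ : V → Fin n × Fin 3) {a b : V}
    (hab : (σ a).1 ≠ (σ b).1) :
    roundCh n (vertexOp n σ a * vertexOp n σ b) =
      (1 / 9 : ℂ) • (vertexOp n σ a * vertexOp n σ b) := by
  rw [vertexOp_eq_piKronecker, vertexOp_eq_piKronecker, piKronecker_mul, roundCh_piKronecker]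
  set Pa : Fin n → Matrix (Fin 2) (Fin 2) ℂ :=
    fun q => if q = (σ a).1 then pauliXYZ (σ a).2 else 1
  set Pb : Fin n → Matrix (Fin 2) (Fin 2) ℂ :=
    fun q => if q = (σ b).1 then pauliXYZ (σ b).2 else 1
  have heigen (q : Fin n) : qubitRoundCh (Pa q * Pb q) =
      ((if q = (σ a).1 then 1 / 3 else 1) * (if q = (σ b).1 then 1 / 3 else 1) : ℂ) •
        (Pa q * Pb q) := by
    rcases eq_or_ne q (σ a).1 with rfl | ha
    · simp [Pa, Pb, hab, qubitRoundCh_pauliXYZ]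
    rcases eq_or_ne q (σ b).1 with rfl | hb
    · simp [Pa, Pb, ha, qubitRoundCh_pauliXYZ]
    · simp [Pa, Pb, ha, hb, qubitRoundCh_one]
  show (piKronecker fun q => qubitRoundCh (Pa q * Pb q)) = _ • piKronecker fun q => Pa q * Pb q
  simp only [heigen, piKronecker_smul, Finset.prod_mul_distrib, Finset.prod_ite_eq',
    Finset.mem_univ, if_true]
  norm_num

end Rounding

theorem SimpleGraph.adj_out_of_mem_edgeFinset {V : Type*} [Fintype V] {G : SimpleGraph V}
    [DecidableRel G.Adj] {e : Sym2 V} (he : e ∈ G.edgeFinset) : G.Adj e.out.1 e.out.2 := by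
  rw [← SimpleGraph.mem_edgeSet, show s(e.out.1, e.out.2) = e from e.out_eq]
  exact G.mem_edgeFinset.1 he

theorem roundCh_relaxH {V : Type*} [Fintype V] [DecidableEq V] {n : ℕ}
    {σ : V → Fin n × Fin 3} {G : SimpleGraph V} [DecidableRel G.Adj]
    (hadj : ∀ u v : V, G.Adj u v → (σ u).1 ≠ (σ v).1) :
    roundCh n (relaxH n σ G) =
      (1 / 9 : ℂ) • relaxH n σ G + (4 * G.edgeFinset.card / 9 : ℂ) • 1 := by
  have hedge {a b : V} (hab : (σ a).1 ≠ (σ b).1) :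
      roundCh n ((1 / 2 : ℂ) • (1 - (3 : ℂ) • (vertexOp n σ a * vertexOp n σ b))) =
        (1 / 9 : ℂ) • ((1 / 2 : ℂ) • (1 - (3 : ℂ) • (vertexOp n σ a * vertexOp n σ b)))
          + (4 / 9 : ℂ) • 1 := by
    rw [← roundChLinearMap_apply, map_smul, map_sub, map_smul, roundChLinearMap_apply,
      roundChLinearMap_apply, roundCh_one, roundCh_vertexOp_mul_vertexOp σ hab]
    module
  rw [relaxH, ← roundChLinearMap_apply, map_sum]
  simp only [roundChLinearMap_apply]
  rw [Finset.sum_congr rfl fun e he => hedge (hadj _ _ (G.adj_out_of_mem_edgeFinset he)),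
    Finset.sum_add_distrib, Finset.smul_sum, Finset.sum_const,
    ← Nat.cast_smul_eq_nsmul ℂ, smul_smul]
  congr 2
  ring

theorem cutVal_le_card_edgeFinset {V : Type*} [Fintype V] [DecidableEq V] (G : SimpleGraph V)
    [DecidableRel G.Adj] {m : V → ℝ} (hm : ∀ v, |m v| ≤ 1) :
    cutVal G m ≤ G.edgeFinset.card := by
  have hterm (u v : V) : (1 / 2 : ℝ) * (1 - m u * m v) ≤ 1 := by
    have hprod : |m u * m v| ≤ 1 := by
      rw [abs_mul]
      exact mul_le_one₀ (hm u) (abs_nonneg _) (hm v)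
    linarith [neg_abs_le (m u * m v)]
  calc cutVal G m ≤ ∑ _e ∈ G.edgeFinset, (1 : ℝ) := Finset.sum_le_sum fun e _ => hterm _ _
    _ = G.edgeFinset.card := by simp

theorem magic_rounding_approximation_ratio_general
    {V : Type*} [Fintype V] [DecidableEq V] (n : ℕ)
    (G : SimpleGraph V) [DecidableRel G.Adj]
    (σ : V → Fin n × Fin 3)
    (hadj : ∀ u v : V, G.Adj u v → (σ u).1 ≠ (σ v).1)
    (cstar : ℝ)
    (hmax : ∃ m : V → ℝ, (∀ v, m v = 1 ∨ m v = -1) ∧ cutVal G m = cstar)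
    (ρ : Matrix (Fin n → Fin 2) (Fin n → Fin 2) ℂ)
    (hρ1 : ρ.trace = 1)
    (henergy : cstar ≤ Complex.re ((relaxH n σ G * ρ).trace)) :
    (5 / 9 : ℝ) * cstar ≤ Complex.re ((relaxH n σ G * roundCh n ρ).trace) := by
  obtain ⟨m, hm, rfl⟩ := hmax
  have hcut : cutVal G m ≤ G.edgeFinset.card :=
    cutVal_le_card_edgeFinset G fun v => by rcases hm v with h | h <;> simp [h]
  have hround : (relaxH n σ G * roundCh n ρ).trace =
      ((1 / 9 : ℝ) : ℂ) * (relaxH n σ G * ρ).trace +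
        ((4 * G.edgeFinset.card / 9 : ℝ) : ℂ) := by
    rw [trace_mul_roundCh, roundCh_relaxH hadj, Matrix.add_mul, trace_add, Matrix.smul_mul,
      Matrix.smul_mul, trace_smul, trace_smul, Matrix.one_mul, hρ1, smul_eq_mul, smul_eq_mul,
      mul_one]
    push_cast
    rfl
  rw [hround, Complex.add_re, Complex.re_ofReal_mul, Complex.ofReal_re]
  linarith

theorem magic_rounding_approximation_ratio
    {V : Type*} [Fintype V] [DecidableEq V] (n : ℕ)
    (G : SimpleGraph V) [DecidableRel G.Adj] (hE : G.edgeFinset.Nonempty)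
    (σ : V → Fin n × Fin 3) (hσ : Function.Injective σ)
    (hadj : ∀ u v : V, G.Adj u v → (σ u).1 ≠ (σ v).1)
    (cstar : ℝ)
    (hmax : ∃ m : V → ℝ, (∀ v, m v = 1 ∨ m v = -1) ∧ cutVal G m = cstar)
    (hub : ∀ m : V → ℝ, (∀ v, m v = 1 ∨ m v = -1) → cutVal G m ≤ cstar)
    (ρ : Matrix (Fin n → Fin 2) (Fin n → Fin 2) ℂ)
    (hρ : ρ.PosSemidef) (hρ1 : ρ.trace = 1)
    (henergy : cstar ≤ Complex.re ((relaxH n σ G * ρ).trace)) :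
    (5 / 9 : ℝ) * cstar ≤ Complex.re ((relaxH n σ G * roundCh n ρ).trace) :=
  magic_rounding_approximation_ratio_general n G σ hadj cstar hmax ρ hρ1 henergy
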